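/- In A_n(X) with n odd, for all a,b,c,d ∈ X one has G(d,b)·O·F(a,c)·E = γ(a,b)·V(c,d)·E, where O = e_1 e_3 ⋯ e_{n−2} and E = e_2 e_4 ⋯ e_{n−1}. -/
import Mathlib


/-- The ascending product `e j * e (j+1) * ⋯ * e k` (empty if `k + 1 ≤ j`). -/
def ascProd {A : Type*} [Ring A] (e : ℕ → A) (j k : ℕ) : A :=
  ((List.range (k + 1 - j)).map (fun i => e (j + i))).prod

/-- The descending product `e k * e (k-1) * ⋯ * e j` (empty if `k + 1 ≤ j`). -/
def descProd {A : Type*} [Ring A] (e : ℕ → A) (j k : ℕ) : A :=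
  ((List.range (k + 1 - j)).map (fun i => e (k - i))).prod

/-- For `n` odd, `O = e 1 * e 3 * ⋯ * e (n-2)` (equal to `1` when `n = 1`). -/
def Oprod {A : Type*} [Ring A] (e : ℕ → A) (n : ℕ) : A :=
  ((List.range ((n - 1) / 2)).map (fun i => e (2 * i + 1))).prod

/-- For `n` odd, `E = e 2 * e 4 * ⋯ * e (n-1)` (equal to `1` when `n = 1`). -/
def Eprod {A : Type*} [Ring A] (e : ℕ → A) (n : ℕ) : A :=
  ((List.range ((n - 1) / 2)).map (fun i => e (2 * i + 2))).prod

/-- For `n` even, `Θ = e 1 * e 3 * ⋯ * e (n-1)`. -/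
def ThetaProd {A : Type*} [Ring A] (e : ℕ → A) (n : ℕ) : A :=
  ((List.range (n / 2)).map (fun i => e (2 * i + 1))).prod

/-- For `n` even, `Ω = e 2 * e 4 * ⋯ * e (n-2)` (equal to `1` when `n = 2`). -/
def OmegaProd {A : Type*} [Ring A] (e : ℕ → A) (n : ℕ) : A :=
  ((List.range (n / 2 - 1)).map (fun i => e (2 * i + 2))).prod

/-- The defining relations (L1)–(L38) of the algebraic label algebra `A_n(X)`,
with TL generators `e i` (`1 ≤ i ≤ n - 1`), label generators `F a b`, `G a b`
(even) and `W a b`, `V a b` (odd), and parameters `β`, `α a b`, `δ a b`, `γ a b`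
in a commutative base ring `R`. -/
structure LabelAlgebraRel (R : Type*) [CommRing R] (A : Type*) [Ring A] [Algebra R A]
    (X : Type*) (n : ℕ) (e : ℕ → A) (F G W V : X → X → A)
    (β : R) (α δ γ : X → X → R) : Prop where
  L1 : ∀ i j, 1 ≤ i → i ≤ n - 1 → 1 ≤ j → j ≤ n - 1 → (i + 2 ≤ j ∨ j + 2 ≤ i) →
    e i * e j = e j * e i
  L2 : ∀ (a b : X) (j : ℕ), 2 ≤ j → j ≤ n - 1 → F a b * e j = e j * F a b
  L3 : ∀ (a b : X) (j : ℕ), 1 ≤ j → j ≤ n - 2 → G a b * e j = e j * G a b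
  L4 : ∀ (a b c d : X), 2 ≤ n → F a b * G c d = G c d * F a b
  L5 : ∀ i j, 1 ≤ i → i ≤ n - 1 → 1 ≤ j → j ≤ n - 1 → (i = j + 1 ∨ j = i + 1) →
    e i * e j * e i = e i
  L6 : ∀ (a b : X) (j : ℕ), 2 ≤ j → j ≤ n - 1 → e j * W a b = W a b * e (j - 1)
  L7 : ∀ (a b : X) (j : ℕ), 1 ≤ j → j ≤ n - 2 → e j * V a b = V a b * e (j + 1)
  L8 : ∀ (a b c d : X), 2 ≤ n → G a b * W c d = W c a * e (n - 1) * G b d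
  L9 : ∀ (a b c d : X), 2 ≤ n → F a b * V c d = V a d * e 1 * F b c
  L10 : ∀ (a b c d : X), 2 ≤ n → W a b * F c d = F a c * e 1 * W d b
  L11 : ∀ (a b c d : X), 2 ≤ n → V a b * G c d = G b c * e (n - 1) * V a d
  L12 : ∀ (a b : X), 2 ≤ n → e 1 * W a b = ascProd e 1 (n - 1) * V a b
  L13 : ∀ (a b : X), 2 ≤ n → W a b * e (n - 1) = V a b * ascProd e 1 (n - 1)
  L14 : ∀ (a b : X), 2 ≤ n → e (n - 1) * V a b = descProd e 1 (n - 1) * W a b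
  L15 : ∀ (a b : X), 2 ≤ n → V a b * e 1 = W a b * descProd e 1 (n - 1)
  L16 : ∀ (a b c d : X), W a b * W c d = F a c * ascProd e 1 (n - 1) * G b d
  L17 : ∀ (a b c d : X), V a b * V c d = G b d * descProd e 1 (n - 1) * F a c
  L18 : ∀ (a b c d : X), 2 ≤ n → V a b * e 1 * W c d = F a c * G b d
  L19 : ∀ j, 1 ≤ j → j ≤ n - 1 → e j * e j = β • e j
  L20 : ∀ (a b c d : X), F c a * F b d = α a b • F c d
  L21 : ∀ (a b : X), 2 ≤ n → e 1 * F a b * e 1 = α a b • e 1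
  L22 : ∀ (a b c d : X), F c a * W b d = α a b • W c d
  L23 : ∀ (a b c d : X), V a d * F b c = α a b • V c d
  L24 : ∀ (a b c d : X), V a c * W b d = α a b • G c d
  L25 : ∀ (a b c d : X), G c a * G b d = δ a b • G c d
  L26 : ∀ (a b : X), 2 ≤ n → e (n - 1) * G a b * e (n - 1) = δ a b • e (n - 1)
  L27 : ∀ (a b c d : X), G c a * V d b = δ a b • V d c
  L28 : ∀ (a b c d : X), W c a * G b d = δ a b • W c d
  L29 : ∀ (a b c d : X), W c a * V d b = δ a b • F c d
  L30 : Odd n → ∀ (a b c d : X),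
    W c b * Oprod e n * W a d * Oprod e n = γ a b • (W c d * Oprod e n)
  L31 : Odd n → ∀ (a b c d : X),
    F c a * Eprod e n * V d b * Eprod e n = γ a b • (F c d * Eprod e n)
  L32 : Odd n → ∀ (a b c d : X),
    V a d * Eprod e n * V c b * Eprod e n = γ a b • (V c d * Eprod e n)
  L33 : Odd n → ∀ (a b c d : X),
    G c b * Oprod e n * W a d * Oprod e n = γ a b • (G c d * Oprod e n)
  L34 : Even n → ∀ (a b : X),
    ThetaProd e n * W a b * ThetaProd e n = γ a b • ThetaProd e n
  L35 : n = 1 → ∀ (a b c d : X), F c a * G b d = γ a b • W c d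
  L36 : n = 1 → ∀ (a b c d : X), G d b * F a c = γ a b • V c d
  L37 : n = 1 → ∀ (a b c d : X), W c b * F a d = γ a b • F c d
  L38 : n = 1 → ∀ (a b c d : X), V a c * G b d = γ a b • G c d


private lemma listprod_range_succ {A : Type*} [Ring A] (f : ℕ → A) (k : ℕ) :
    ((List.range (k+1)).map f).prod = ((List.range k).map f).prod * f k := by
  simp [List.range_succ]

private lemma commute_range_prod {A : Type*} [Ring A] (f : ℕ → A) (x : A) (k : ℕ)
    (h : ∀ i < k, x * f i = f i * x) :
    x * ((List.range k).map f).prod = ((List.range k).map f).prod * x := by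
  refine (Commute.list_prod_right _ _ ?_).eq
  intro y hy
  simp only [List.mem_map, List.mem_range] at hy
  obtain ⟨i, hi, rfl⟩ := hy
  exact h i hi

private lemma swap_t {A : Type*} [Ring A] {a b : A} (h : a * b = b * a) (t : A) :
    a * (b * t) = b * (a * t) := by
  rw [← mul_assoc, h, mul_assoc]

private lemma l5_t {A : Type*} [Ring A] {a b : A} (h : a * b * a = a) (t : A) :
    a * (b * (a * t)) = a * t := by
  rw [← mul_assoc, ← mul_assoc, h]

private lemma descProd_one_succ {A : Type*} [Ring A] (e : ℕ → A) (k : ℕ) :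
    descProd e 1 (k + 1) = e (k + 1) * descProd e 1 k := by
  unfold descProd
  simp only [Nat.add_sub_cancel, List.range_succ_eq_map, List.map_cons, List.map_map,
    List.prod_cons, Nat.sub_zero]
  congr 1
  have : ((fun i => e (k + 1 - i)) ∘ Nat.succ) = fun i => e (k - i) := by
    funext i
    simp [Nat.succ_sub_succ]
  rw [this]

private lemma Vmove {A : Type*} [Ring A] (e : ℕ → A) (v : A) (m : ℕ)
    (h7 : ∀ j, 1 ≤ j → j ≤ 2*m - 1 → e j * v = v * e (j+1)) :
    ∀ k, k ≤ m → v * ((List.range k).map (fun i => e (2*i+2))).prod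
      = ((List.range k).map (fun i => e (2*i+1))).prod * v := by
  intro k
  induction k with
  | zero => intro _; simp
  | succ k ih =>
    intro hk
    have h := h7 (2*k+1) (by omega) (by omega)
    rw [show 2*k+1+1 = 2*k+2 from by ring] at h
    rw [listprod_range_succ, listprod_range_succ, ← mul_assoc, ih (by omega), mul_assoc,
      ← h, ← mul_assoc]

private lemma keyDE {A : Type*} [Ring A] (e : ℕ → A) (m : ℕ)
    (h5 : ∀ i j, 1 ≤ i → i ≤ 2*m → 1 ≤ j → j ≤ 2*m → (i = j+1 ∨ j = i+1) →
      e i * e j * e i = e i)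
    (hc : ∀ i j, 1 ≤ i → i ≤ 2*m → 1 ≤ j → j ≤ 2*m → (i+2 ≤ j ∨ j+2 ≤ i) →
      e i * e j = e j * e i) :
    ∀ k, k ≤ m → ∀ t : A,
      descProd e 1 (2*k) * (((List.range k).map (fun i => e (2*i+2))).prod * t)
        = ((List.range k).map (fun i => e (2*i+2))).prod * t := by
  intro k
  induction k with
  | zero => intro _ t; simp [descProd]
  | succ k ih =>
    intro hk t
    match k, hk, ih with
    | 0, hk, _ =>
      have h : e 2 * e 1 * e 2 = e 2 :=
        h5 2 1 (by omega) (by omega) (by omega) (by omega) (by omega)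
      norm_num [descProd, List.range_succ, mul_assoc]
      exact l5_t h t
    | j+1, hk, ih =>
      have h522 : e (2*(j+1)+2) * e (2*(j+1)+1) * e (2*(j+1)+2) = e (2*(j+1)+2) :=
        h5 (2*(j+1)+2) (2*(j+1)+1) (by omega) (by omega) (by omega) (by omega) (by omega)
      have hD : descProd e 1 (2*(j+1+1))
          = e (2*(j+1)+2) * (e (2*(j+1)+1) * descProd e 1 (2*(j+1))) := by
        rw [show 2*(j+1+1) = ((2*(j+1))+1)+1 from by ring, descProd_one_succ,
          descProd_one_succ]
      have hE1 : ((List.range (j+1+1)).map (fun i => e (2*i+2))).prod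
          = ((List.range (j+1)).map (fun i => e (2*i+2))).prod * e (2*(j+1)+2) :=
        listprod_range_succ _ _
      have hE2 : ((List.range (j+1)).map (fun i => e (2*i+2))).prod
          = ((List.range j).map (fun i => e (2*i+2))).prod * e (2*j+2) :=
        listprod_range_succ _ _
      have ck1 : e (2*(j+1)+1) * ((List.range j).map (fun i => e (2*i+2))).prod
          = ((List.range j).map (fun i => e (2*i+2))).prod * e (2*(j+1)+1) :=
        commute_range_prod _ _ j fun i hi =>
          hc (2*(j+1)+1) (2*i+2) (by omega) (by omega) (by omega) (by omega) (by omega)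
      have ck2 : e (2*(j+1)+2) * ((List.range j).map (fun i => e (2*i+2))).prod
          = ((List.range j).map (fun i => e (2*i+2))).prod * e (2*(j+1)+2) :=
        commute_range_prod _ _ j fun i hi =>
          hc (2*(j+1)+2) (2*i+2) (by omega) (by omega) (by omega) (by omega) (by omega)
      have cswap : e (2*j+2) * e (2*(j+1)+2) = e (2*(j+1)+2) * e (2*j+2) :=
        hc (2*j+2) (2*(j+1)+2) (by omega) (by omega) (by omega) (by omega) (by omega)
      rw [hD, hE1]
      simp only [mul_assoc]
      rw [ih (by omega) (e (2*(j+1)+2) * t), hE2]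
      simp only [mul_assoc]
      rw [swap_t ck1, swap_t ck2, swap_t cswap, l5_t h522 (e (2*j+2) * t)]

theorem stmt {R : Type*} [CommRing R] {A : Type*} [Ring A] [Algebra R A] {X : Type*}
    (n : ℕ) (e : ℕ → A) (F G W V : X → X → A) (β : R) (α δ γ : X → X → R)
    (hrel : LabelAlgebraRel R A X n e F G W V β α δ γ)
    (hodd : Odd n) (a b c d : X) :
    G d b * Oprod e n * F a c * Eprod e n = γ a b • (V c d * Eprod e n) := by
  obtain ⟨m, rfl⟩ := hodd
  have hm1 : (2*m+1-1)/2 = m := by omega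
  have hn1 : (2*m+1) - 1 = 2*m := by omega
  simp only [Oprod, Eprod, hm1]
  set Ok := ((List.range m).map (fun i => e (2*i+1))).prod with hOk
  set Ek := ((List.range m).map (fun i => e (2*i+2))).prod with hEk
  have hG : G d b * Ok = Ok * G d b := by
    rw [hOk]
    apply commute_range_prod
    intro i hi
    exact hrel.L3 d b (2*i+1) (by omega) (by omega)
  have hF : F a c * Ek = Ek * F a c := by
    rw [hEk]
    apply commute_range_prod
    intro i hi
    exact hrel.L2 a c (2*i+2) (by omega) (by omega)
  have hV : V a d * Ek = Ok * V a d := by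
    rw [hOk, hEk]
    exact Vmove e (V a d) m (fun j h1 h2 => hrel.L7 a d j h1 (by omega)) m le_rfl
  have hKey : descProd e 1 (2*m) * Ek = Ek := by
    have := keyDE e m
      (fun i j hi1 hi2 hj1 hj2 hij => hrel.L5 i j hi1 (by omega) hj1 (by omega) hij)
      (fun i j hi1 hi2 hj1 hj2 hij => hrel.L1 i j hi1 (by omega) hj1 (by omega) hij)
      m (le_refl m) 1
    rw [mul_one] at this
    rw [hEk]
    exact this
  have hL17 : V a d * V c b = G d b * descProd e 1 (2*m) * F a c := by
    have := hrel.L17 a d c b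
    rwa [hn1] at this
  have hL32 : V a d * Ek * V c b * Ek = γ a b • (V c d * Ek) := by
    have := hrel.L32 ⟨m, rfl⟩ a b c d
    simp only [Eprod, hm1, ← hEk] at this
    exact this
  have main : γ a b • (V c d * Ek) = G d b * Ok * F a c * Ek := by
    calc γ a b • (V c d * Ek) = V a d * Ek * V c b * Ek := hL32.symm
      _ = Ok * V a d * V c b * Ek := by rw [hV]
      _ = Ok * (V a d * V c b) * Ek := by rw [mul_assoc Ok]
      _ = Ok * (G d b * descProd e 1 (2*m) * F a c) * Ek := by rw [hL17]
      _ = Ok * (G d b * descProd e 1 (2*m)) * (F a c * Ek) := by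
            rw [← mul_assoc Ok (G d b * descProd e 1 (2*m)) (F a c), mul_assoc]
      _ = Ok * (G d b * descProd e 1 (2*m)) * (Ek * F a c) := by rw [hF]
      _ = Ok * G d b * (descProd e 1 (2*m) * Ek) * F a c := by
            simp only [mul_assoc]
      _ = Ok * G d b * Ek * F a c := by rw [hKey]
      _ = Ok * G d b * (F a c * Ek) := by rw [mul_assoc (Ok * G d b), ← hF]
      _ = Ok * G d b * F a c * Ek := by rw [← mul_assoc]
      _ = G d b * Ok * F a c * Ek := by rw [← hG]
  exact main.symm
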